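/- arXiv:1201.1795 — 3 statements merged into one kernel-verified Lean document; each statement's English description precedes it below -/
import Mathlib

section
/- For the real sequential method G defined by G(x) = lim_{n→∞} (x_n + x_{n+1})/2 (on the subgroup of real sequences for which this limit exists), G is a regular method, the sets {0} and {1} are G-sequentially closed, but their union {0,1} is not G-sequentially closed; in fact cl_G({0,1}) = {0, 1/2, 1}. -/
open Filter Topology Set Pointwise

/-- A method of sequential convergence on an abelian group `X`: an additive
function `G` defined on a subgroup of the group of `X`-valued sequences. -/
structure SeqMethod (X : Type*) [AddCommGroup X] where
  dom : AddSubgroup (ℕ → X)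
  G : dom →+ X

namespace SeqMethod

variable {X : Type*} [AddCommGroup X] (M : SeqMethod X)

/-- `G`-sequential closure of a set. -/
def cl (A : Set X) : Set X :=
  {l | ∃ x : M.dom, (∀ n, (x : ℕ → X) n ∈ A) ∧ M.G x = l}

/-- A set is `G`-sequentially closed if it contains its `G`-sequential closure. -/
def IsGClosed (A : Set X) : Prop := M.cl A ⊆ A

/-- A set is `G`-sequentially open if its complement is `G`-sequentially closed. -/
def IsGOpen (A : Set X) : Prop := M.IsGClosed Aᶜ

/-- `G`-interior: union of all `G`-sequentially open subsets contained in `A`. -/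
def gInterior (A : Set X) : Set X := ⋃₀ {U | M.IsGOpen U ∧ U ⊆ A}

/-- A method is regular if every convergent sequence is `G`-convergent to its limit. -/
def Regular [TopologicalSpace X] : Prop :=
  ∀ (x : ℕ → X) (l : X), Tendsto x atTop (nhds l) →
    ∃ h : x ∈ M.dom, M.G ⟨x, h⟩ = l

/-- A method is subsequential if every `G`-convergent sequence has a subsequence
converging (topologically) to the `G`-limit. -/
def Subsequential [TopologicalSpace X] : Prop :=
  ∀ (x : M.dom) (l : X), M.G x = l →
    ∃ φ : ℕ → ℕ, StrictMono φ ∧ Tendsto ((x : ℕ → X) ∘ φ) atTop (nhds l)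

/-- `G`-sequential continuity of `f` (at every point). -/
def GContinuous (f : X → X) : Prop :=
  ∀ (x : M.dom) (u : X), M.G x = u →
    ∃ h : (f ∘ (x : ℕ → X)) ∈ M.dom, M.G ⟨f ∘ (x : ℕ → X), h⟩ = f u

/-- `f` is `G`-sequentially open if images of `G`-sequentially open sets are
`G`-sequentially open. -/
def IsGOpenMap (f : X → X) : Prop := ∀ U, M.IsGOpen U → M.IsGOpen (f '' U)

/-- `f` is `G`-sequentially closed if images of `G`-sequentially closed sets are
`G`-sequentially closed. -/
def IsGClosedMap (f : X → X) : Prop := ∀ K, M.IsGClosed K → M.IsGClosed (f '' K)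

end SeqMethod

/-!
Each average `(x n + x (n + 1)) / 2` of a sequence with values in `A` is a midpoint of two points
of `A`, so for a finite `A` the `G`-limits of such sequences are midpoints of `A`. Conversely the
sequence alternating between `a` and `b` has constant averages `(a + b) / 2`. So `cl A` is exactly
the set of midpoints of `A`: `{c}` for `A = {c}`, but `{0, 1/2, 1}` for `A = {0, 1}`.
-/

namespace SeqMethod

section Averaging

variable (M : SeqMethod ℝ)
  (hdom : ∀ x : ℕ → ℝ, x ∈ M.dom ↔
    ∃ L : ℝ, Tendsto (fun n => (x n + x (n + 1)) / 2) atTop (𝓝 L))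
  (hG : ∀ (x : ℕ → ℝ) (h : x ∈ M.dom),
    Tendsto (fun n => (x n + x (n + 1)) / 2) atTop (𝓝 (M.G ⟨x, h⟩)))
include hdom hG

theorem exists_G_eq_of_tendsto_avg {x : ℕ → ℝ} {L : ℝ}
    (hx : Tendsto (fun n => (x n + x (n + 1)) / 2) atTop (𝓝 L)) :
    ∃ h : x ∈ M.dom, M.G ⟨x, h⟩ = L :=
  ⟨(hdom x).2 ⟨L, hx⟩, tendsto_nhds_unique (hG _ _) hx⟩

theorem regular_of_avg : M.Regular := by
  intro x l hx
  refine M.exists_G_eq_of_tendsto_avg hdom hG ?_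
  simpa using (hx.add (hx.comp (tendsto_add_atTop_nat 1))).div_const 2

theorem midpoint_mem_cl {A : Set ℝ} {a b : ℝ} (ha : a ∈ A) (hb : b ∈ A) :
    (a + b) / 2 ∈ M.cl A := by
  set x : ℕ → ℝ := fun n => if Even n then a else b
  have hx : (fun n => (x n + x (n + 1)) / 2) = fun _ => (a + b) / 2 := by
    funext n
    by_cases hn : Even n <;> simp [x, hn, Nat.even_add_one, add_comm]
  obtain ⟨hmem, hGx⟩ := M.exists_G_eq_of_tendsto_avg hdom hG (hx ▸ tendsto_const_nhds)
  refine ⟨⟨x, hmem⟩, fun n => ?_, hGx⟩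
  by_cases hn : Even n <;> simp [x, hn, ha, hb]

omit hdom in
theorem cl_subset_closure_midpoints (A : Set ℝ) :
    M.cl A ⊆ closure (image2 (fun a b => (a + b) / 2) A A) := by
  rintro _ ⟨x, hxA, rfl⟩
  exact mem_closure_of_tendsto (hG _ x.2)
    (Eventually.of_forall fun n => mem_image2_of_mem (hxA n) (hxA (n + 1)))

theorem cl_eq_midpoints {A : Set ℝ} (hA : A.Finite) :
    M.cl A = image2 (fun a b => (a + b) / 2) A A := by
  refine ((M.cl_subset_closure_midpoints hG A).trans
    (hA.image2 _ hA).isClosed.closure_subset).antisymm ?_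
  rintro _ ⟨a, ha, b, hb, rfl⟩
  exact M.midpoint_mem_cl hdom hG ha hb

end Averaging

end SeqMethod

theorem averaging_method_example (M : SeqMethod ℝ)
    (hdom : ∀ x : ℕ → ℝ, x ∈ M.dom ↔
      ∃ L : ℝ, Filter.Tendsto (fun n => (x n + x (n + 1)) / 2) Filter.atTop (nhds L))
    (hG : ∀ (x : ℕ → ℝ) (h : x ∈ M.dom),
      Filter.Tendsto (fun n => (x n + x (n + 1)) / 2) Filter.atTop (nhds (M.G ⟨x, h⟩))) :
    M.Regular ∧ M.IsGClosed {0} ∧ M.IsGClosed {1} ∧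
      ¬ M.IsGClosed ({0, 1} : Set ℝ) ∧
      M.cl ({0, 1} : Set ℝ) = {0, 1 / 2, 1} := by
  have hsingleton (c : ℝ) : M.IsGClosed {c} := by
    simp [SeqMethod.IsGClosed, M.cl_eq_midpoints hdom hG (finite_singleton c)]
  have hpair : M.cl ({0, 1} : Set ℝ) = {0, 1 / 2, 1} := by
    rw [M.cl_eq_midpoints hdom hG (toFinite _)]
    ext
    simp [image2_insert_right]
    tauto
  refine ⟨M.regular_of_avg hdom hG, hsingleton 0, hsingleton 1, fun h => ?_, hpair⟩
  have := h (hpair ▸ show (1 / 2 : ℝ) ∈ ({0, 1 / 2, 1} : Set ℝ) by simp)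
  norm_num at this
end

section
/- For the method G(x) = lim (x_n + x_{n+1})/2 on ℝ and A = {0,1}, the G-closure is not idempotent: cl_G(cl_G(A)) = {0, 1/4, 1/2, 3/4, 1} ≠ {0, 1/2, 1} = cl_G(A). -/
open Filter Topology Set Pointwise

/-!
For the averaging method, `cl S` is squeezed between the set of midpoints `(a + b) / 2` of
points of `S` and its topological closure: an alternating sequence `a, b, a, b, …` realises
every midpoint, and conversely every averaged term of a sequence in `S` is such a midpoint.
A finite `S` has a finite, hence closed, midpoint set, so there `cl S` is exactly the midpoint
set: `{0, 1}` has midpoints `{0, 1/2, 1}`, which in turn has the five quarter points as midpoints.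
-/

def midpoints (S : Set ℝ) : Set ℝ := image2 (fun a b => (a + b) / 2) S S

theorem midpoints_zero_one : midpoints {0, 1} = {0, 1 / 2, 1} := by
  ext l
  simp only [midpoints, mem_image2, mem_insert_iff, mem_singleton_iff]
  constructor
  · rintro ⟨a, ha | ha, b, hb | hb, rfl⟩ <;> subst ha hb <;> norm_num
  · rintro (rfl | rfl | rfl)
    exacts [⟨0, by simp, 0, by simp, by norm_num⟩, ⟨0, by simp, 1, by simp, by norm_num⟩,
      ⟨1, by simp, 1, by simp, by norm_num⟩]

theorem midpoints_zero_half_one : midpoints {0, 1 / 2, 1} = {0, 1 / 4, 1 / 2, 3 / 4, 1} := by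
  ext l
  simp only [midpoints, mem_image2, mem_insert_iff, mem_singleton_iff]
  constructor
  · rintro ⟨a, ha | ha | ha, b, hb | hb | hb, rfl⟩ <;> subst ha hb <;> norm_num
  · rintro (rfl | rfl | rfl | rfl | rfl)
    exacts [⟨0, by simp, 0, by simp, by norm_num⟩, ⟨0, by simp, 1 / 2, by simp, by norm_num⟩,
      ⟨0, by simp, 1, by simp, by norm_num⟩, ⟨1 / 2, by simp, 1, by simp, by norm_num⟩,
      ⟨1, by simp, 1, by simp, by norm_num⟩]

namespace SeqMethod

theorem midpoints_subset_cl (M : SeqMethod ℝ)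
    (hdom : ∀ x : ℕ → ℝ, x ∈ M.dom ↔
      ∃ L : ℝ, Tendsto (fun n => (x n + x (n + 1)) / 2) atTop (nhds L))
    (hG : ∀ (x : ℕ → ℝ) (h : x ∈ M.dom),
      Tendsto (fun n => (x n + x (n + 1)) / 2) atTop (nhds (M.G ⟨x, h⟩)))
    (S : Set ℝ) : midpoints S ⊆ M.cl S := by
  rintro _ ⟨a, ha, b, hb, rfl⟩
  set x : ℕ → ℝ := fun n => if Even n then a else b
  have hmean : (fun n => (x n + x (n + 1)) / 2) = fun _ => (a + b) / 2 := by
    funext n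
    by_cases hn : Even n
    · simp [x, hn, Nat.even_add_one]
    · simp [x, hn, Nat.even_add_one, add_comm]
  have hlim : Tendsto (fun n => (x n + x (n + 1)) / 2) atTop (nhds ((a + b) / 2)) := by
    rw [hmean]
    exact tendsto_const_nhds
  have hx : x ∈ M.dom := (hdom x).2 ⟨_, hlim⟩
  refine ⟨⟨x, hx⟩, fun n => ?_, tendsto_nhds_unique (hG x hx) hlim⟩
  by_cases hn : Even n <;> simp [x, hn, ha, hb]

theorem cl_subset_closure_midpoints_s4 (M : SeqMethod ℝ)
    (hG : ∀ (x : ℕ → ℝ) (h : x ∈ M.dom),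
      Tendsto (fun n => (x n + x (n + 1)) / 2) atTop (nhds (M.G ⟨x, h⟩)))
    (S : Set ℝ) : M.cl S ⊆ closure (midpoints S) := by
  rintro _ ⟨⟨x, hx⟩, hxS, rfl⟩
  exact mem_closure_of_tendsto (hG x hx)
    (Eventually.of_forall fun n => mem_image2_of_mem (hxS n) (hxS (n + 1)))

theorem cl_eq_midpoints_of_finite (M : SeqMethod ℝ)
    (hdom : ∀ x : ℕ → ℝ, x ∈ M.dom ↔
      ∃ L : ℝ, Tendsto (fun n => (x n + x (n + 1)) / 2) atTop (nhds L))
    (hG : ∀ (x : ℕ → ℝ) (h : x ∈ M.dom),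
      Tendsto (fun n => (x n + x (n + 1)) / 2) atTop (nhds (M.G ⟨x, h⟩)))
    {S : Set ℝ} (hS : S.Finite) : M.cl S = midpoints S := by
  refine (M.cl_subset_closure_midpoints_s4 hG S).trans ?_ |>.antisymm
    (M.midpoints_subset_cl hdom hG S)
  exact (hS.image2 _ hS).isClosed.closure_subset

end SeqMethod

theorem averaging_method_closure_not_idempotent (M : SeqMethod ℝ)
    (hdom : ∀ x : ℕ → ℝ, x ∈ M.dom ↔
      ∃ L : ℝ, Filter.Tendsto (fun n => (x n + x (n + 1)) / 2) Filter.atTop (nhds L))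
    (hG : ∀ (x : ℕ → ℝ) (h : x ∈ M.dom),
      Filter.Tendsto (fun n => (x n + x (n + 1)) / 2) Filter.atTop (nhds (M.G ⟨x, h⟩))) :
    M.cl (M.cl ({0, 1} : Set ℝ)) = {0, 1 / 4, 1 / 2, 3 / 4, 1} ∧
      M.cl ({0, 1} : Set ℝ) = {0, 1 / 2, 1} ∧
      M.cl (M.cl ({0, 1} : Set ℝ)) ≠ M.cl ({0, 1} : Set ℝ) := by
  have hcl : M.cl ({0, 1} : Set ℝ) = {0, 1 / 2, 1} := by
    rw [M.cl_eq_midpoints_of_finite hdom hG (toFinite _), midpoints_zero_one]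
  have hclcl : M.cl (M.cl ({0, 1} : Set ℝ)) = {0, 1 / 4, 1 / 2, 3 / 4, 1} := by
    rw [hcl, M.cl_eq_midpoints_of_finite hdom hG (toFinite _),
      midpoints_zero_half_one]
  refine ⟨hclcl, hcl, fun h => ?_⟩
  have hquarter : (1 / 4 : ℝ) ∈ M.cl ({0, 1} : Set ℝ) := h ▸ hclcl ▸ by simp
  rw [hcl] at hquarter
  norm_num at hquarter
end

section
/- For a regular method G and any a ∈ X, the translation map f_a : X → X, f_a(x) = a + x, is G-sequentially continuous, G-sequentially open, and G-sequentially closed; consequently, if A, B ⊆ X and B is G-sequentially open, then the sumset A + B = {a + b : a ∈ A, b ∈ B} is G-sequentially open. -/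
open Filter Topology Set Pointwise

variable {X : Type*} [AddCommGroup X] [TopologicalSpace X] [IsTopologicalAddGroup X] [FirstCountableTopology X] [T2Space X]


/-! By regularity the constant sequence `a` is `G`-convergent to `a`. Adding it to (or subtracting
it from) a `G`-convergent sequence translates the `G`-limit by `a`, which gives the three properties
of `x ↦ a + x`. Finally `A + B` is the union of the translates `a + B`, `a ∈ A`, and unions of
`G`-sequentially open sets are `G`-sequentially open, as intersections of `G`-sequentially closed
sets are `G`-sequentially closed. -/

namespace SeqMethod

variable {Y : Type*} [AddCommGroup Y] (M : SeqMethod Y)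

def FixesConstants : Prop :=
  ∀ a : Y, ∃ c : M.dom, (∀ n, (c : ℕ → Y) n = a) ∧ M.G c = a

theorem Regular.fixesConstants [TopologicalSpace Y] {M : SeqMethod Y} (hM : M.Regular) :
    M.FixesConstants := fun a =>
  let ⟨hc, hGc⟩ := hM _ a tendsto_const_nhds
  ⟨⟨_, hc⟩, fun _ => rfl, hGc⟩

variable {M}

theorem isGClosed_iInter {ι : Sort*} {K : ι → Set Y} (hK : ∀ i, M.IsGClosed (K i)) :
    M.IsGClosed (⋂ i, K i) := fun _ ⟨x, hx, hGx⟩ =>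
  mem_iInter.2 fun i => hK i ⟨x, fun n => mem_iInter.1 (hx n) i, hGx⟩

theorem isGOpen_iUnion {ι : Sort*} {U : ι → Set Y} (hU : ∀ i, M.IsGOpen (U i)) :
    M.IsGOpen (⋃ i, U i) := by
  rw [IsGOpen, compl_iUnion]
  exact isGClosed_iInter hU

theorem FixesConstants.gContinuous_add_left (hM : M.FixesConstants) (a : Y) :
    M.GContinuous (a + ·) := by
  intro x u hGx
  obtain ⟨c, hc, hGc⟩ := hM a
  have hcx : (a + ·) ∘ (x : ℕ → Y) = ((c + x : M.dom) : ℕ → Y) :=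
    funext fun n => by simp [hc]
  refine ⟨hcx ▸ (c + x).2, ?_⟩
  calc M.G ⟨_, _⟩ = M.G (c + x) := congrArg M.G (Subtype.ext hcx)
    _ = a + u := by rw [map_add, hGc, hGx]

theorem FixesConstants.cl_image_add_left_subset (hM : M.FixesConstants) (a : Y) (K : Set Y) :
    M.cl ((a + ·) '' K) ⊆ (a + ·) '' M.cl K := by
  rintro l ⟨x, hx, hGx⟩
  obtain ⟨c, hc, hGc⟩ := hM a
  refine ⟨l - a, ⟨x - c, fun n => ?_, by rw [map_sub, hGx, hGc]⟩, add_sub_cancel a l⟩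
  obtain ⟨k, hk, hkx⟩ := hx n
  simpa [hc, ← hkx] using hk

theorem IsGClosed.image_add_left (hM : M.FixesConstants) {K : Set Y} (hK : M.IsGClosed K)
    (a : Y) : M.IsGClosed ((a + ·) '' K) :=
  (hM.cl_image_add_left_subset a K).trans (image_mono hK)

theorem IsGOpen.image_add_left (hM : M.FixesConstants) {U : Set Y} (hU : M.IsGOpen U)
    (a : Y) : M.IsGOpen ((a + ·) '' U) := by
  rw [IsGOpen, ← image_compl_eq (f := (a + ·)) (Equiv.addLeft a).bijective]
  exact IsGClosed.image_add_left hM hU a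

theorem IsGOpen.add_left (hM : M.FixesConstants) {B : Set Y} (hB : M.IsGOpen B) (A : Set Y) :
    M.IsGOpen (A + B) := by
  rw [← iUnion_add_left_image]
  exact isGOpen_iUnion fun a => isGOpen_iUnion fun _ => hB.image_add_left hM a

end SeqMethod

theorem translation_gContinuous_open_closed (M : SeqMethod X) (hreg : M.Regular) :
    (∀ a : X, M.GContinuous (fun x => a + x) ∧ M.IsGOpenMap (fun x => a + x) ∧
        M.IsGClosedMap (fun x => a + x)) ∧
      (∀ A B : Set X, M.IsGOpen B → M.IsGOpen (A + B)) := by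
  have hM := hreg.fixesConstants
  exact ⟨fun a => ⟨hM.gContinuous_add_left a, fun U hU => hU.image_add_left hM a,
      fun K hK => hK.image_add_left hM a⟩,
    fun A B hB => hB.add_left hM A⟩
end
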